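/- arXiv:1912.05174 — 3 statements merged into one kernel-verified Lean document; each statement's English description precedes it below -/
import Mathlib

section
/- Let H₁, H₂, K be real Hilbert spaces, A : H₁ → H₁, B : H₂ → H₂ bounded self-adjoint operators with ⟨Av,v⟩ ≥ a‖v‖² and ⟨Bw,w⟩ ≥ b‖w‖² for some a, b > 0, and T₁ : H₁ → K, T₂ : H₂ → K bounded linear maps. Define the seminorms |(v,w)|² = ⟨Av,v⟩ + ⟨Bw,w⟩ + ‖T₁v + T₂w‖², |v|_m² = ⟨Av,v⟩ + ‖T₁v‖², |w|_f² = ⟨Bw,w⟩ + ‖T₂w‖². Suppose there exists L ≥ 0 such that ‖T₁v‖² ≤ L·⟨Av,v⟩ for all v ∈ H₁. Then for all (v,w) ∈ H₁ × H₂: |v|_m² ≤ (1 + L)|(v,w)|² and |w|_f² ≤ (1 + L)|(v,w)|². -/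
open scoped InnerProductSpace

/-- key seminorm comparison in the convergence proof of the
undrained split: if `‖T₁v‖² ≤ L⟨Av,v⟩` for all `v`, then
`|v|_m² ≤ (1+L)|(v,w)|²` and `|w|_f² ≤ (1+L)|(v,w)|²`, where
`|(v,w)|² = ⟨Av,v⟩ + ⟨Bw,w⟩ + ‖T₁v + T₂w‖²`, `|v|_m² = ⟨Av,v⟩ + ‖T₁v‖²`,
`|w|_f² = ⟨Bw,w⟩ + ‖T₂w‖²`. -/
theorem seminorm_comparison_undrained_split
    {H₁ H₂ K : Type*}
    [NormedAddCommGroup H₁] [InnerProductSpace ℝ H₁] [CompleteSpace H₁]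
    [NormedAddCommGroup H₂] [InnerProductSpace ℝ H₂] [CompleteSpace H₂]
    [NormedAddCommGroup K] [InnerProductSpace ℝ K] [CompleteSpace K]
    (A : H₁ →L[ℝ] H₁) (B : H₂ →L[ℝ] H₂)
    (hA : IsSelfAdjoint A) (hB : IsSelfAdjoint B)
    (a b : ℝ) (ha : 0 < a) (hb : 0 < b)
    (hAco : ∀ v : H₁, a * ‖v‖ ^ 2 ≤ ⟪A v, v⟫_ℝ)
    (hBco : ∀ w : H₂, b * ‖w‖ ^ 2 ≤ ⟪B w, w⟫_ℝ)
    (T₁ : H₁ →L[ℝ] K) (T₂ : H₂ →L[ℝ] K)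
    (L : ℝ) (hL : 0 ≤ L)
    (hT₁ : ∀ v : H₁, ‖T₁ v‖ ^ 2 ≤ L * ⟪A v, v⟫_ℝ) :
    ∀ (v : H₁) (w : H₂),
      ⟪A v, v⟫_ℝ + ‖T₁ v‖ ^ 2 ≤
        (1 + L) * (⟪A v, v⟫_ℝ + ⟪B w, w⟫_ℝ + ‖T₁ v + T₂ w‖ ^ 2) ∧
      ⟪B w, w⟫_ℝ + ‖T₂ w‖ ^ 2 ≤
        (1 + L) * (⟪A v, v⟫_ℝ + ⟪B w, w⟫_ℝ + ‖T₁ v + T₂ w‖ ^ 2) := by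
  intro v w
  have hAv : (0:ℝ) ≤ ⟪A v, v⟫_ℝ := le_trans (by positivity) (hAco v)
  have hBw : (0:ℝ) ≤ ⟪B w, w⟫_ℝ := le_trans (by positivity) (hBco w)
  have hT := hT₁ v
  have hs : (0:ℝ) ≤ ‖T₁ v + T₂ w‖ ^ 2 := by positivity
  constructor
  · nlinarith [norm_nonneg (T₁ v)]
  · have htri : ‖T₂ w‖ ≤ ‖T₁ v + T₂ w‖ + ‖T₁ v‖ := by
      calc ‖T₂ w‖ = ‖(T₁ v + T₂ w) - T₁ v‖ := by rw [add_sub_cancel_left]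
        _ ≤ ‖T₁ v + T₂ w‖ + ‖T₁ v‖ := norm_sub_le _ _
    rcases eq_or_lt_of_le hL with h0 | hLpos
    · have hT0 : ‖T₁ v‖ = 0 := by nlinarith [norm_nonneg (T₁ v)]
      nlinarith [norm_nonneg (T₂ w), norm_nonneg (T₁ v + T₂ w)]
    · nlinarith [sq_nonneg (L * ‖T₁ v + T₂ w‖ - ‖T₁ v‖), norm_nonneg (T₂ w),
        norm_nonneg (T₁ v), norm_nonneg (T₁ v + T₂ w),
        mul_nonneg (le_of_lt hLpos) hAv,
        mul_le_mul_of_nonneg_left htri (norm_nonneg (T₂ w)),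
        sq_nonneg (‖T₁ v + T₂ w‖ + ‖T₁ v‖ - ‖T₂ w‖),
        mul_pos hLpos hLpos]
end

section
/- Let H₁, H₂ be real Hilbert spaces, M : H₁ → H₁ bounded self-adjoint coercive, K : H₂ → H₂ bounded self-adjoint coercive, B₁ : H₁ → K₀ and B₂ : H₂ → K₀ bounded linear into a Hilbert space K₀, c₀ > 0, h ∈ K₀, f ∈ H₁, g ∈ H₂. Suppose (u,q) ∈ H₁ × H₂ and p ∈ K₀ satisfy the coupled linear system: ⟨Mu,v⟩ − ⟨p, B₁v⟩ = ⟨f,v⟩ for all v ∈ H₁; c₀⟨p, r⟩ + ⟨B₁u, r⟩ + ⟨B₂q, r⟩ = ⟨h, r⟩ for all r ∈ K₀; ⟨Kq,w⟩ − ⟨p, B₂w⟩ = ⟨g,w⟩ for all w ∈ H₂. Then (u,q) is the unique minimizer of E(u,q) = ½⟨Mu,u⟩ + ½⟨Kq,q⟩ + (1/2c₀)‖h − B₁u − B₂q‖² − ⟨f,u⟩ − ⟨g,q⟩ over H₁ × H₂, and p = c₀⁻¹(h − B₁u − B₂q). Conversely, the minimizer of E together with this p solves the coupled system. -/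
/-!
The energy is quadratic, so with the pressure `p = c₀⁻¹ (h - B₁u - B₂q)` it expands exactly as
`E(u + a, q + b) = E(u, q) + δ(a, b) + Q(a, b) / 2`, with `δ` linear (the first variation, built
from the residuals of the first and third equations) and `Q(a, b) = ⟨Ma, a⟩ + ⟨Kb, b⟩ + c₀⁻¹ ‖B₁a + B₂b‖²`.
Since `c₀ ≠ 0`, the middle equation of the system says exactly that `p` is this pressure, and the
other two say `δ = 0`. If `δ = 0`, then `Q ≥ 0` makes `(u, q)` a minimizer, and since `M` and `K`
are positive definite, `Q(a, b) = 0` forces `a = b = 0`, which gives uniqueness. Conversely, at a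
minimizer `t ↦ t δ(a, b) + t² Q(a, b) / 2` is nonnegative, so its discriminant `δ(a, b)²` is `≤ 0`.
-/

open scoped InnerProductSpace

section

variable {E : Type*} [NormedAddCommGroup E] [InnerProductSpace ℝ E] {T : E →L[ℝ] E}

theorem inner_apply_self_pos_of_coercive {μ : ℝ} (hμ : 0 < μ)
    (hT : ∀ x, μ * ‖x‖ ^ 2 ≤ ⟪T x, x⟫_ℝ) (x : E) (hx : x ≠ 0) : 0 < ⟪T x, x⟫_ℝ :=
  (mul_pos hμ (pow_pos (norm_pos_iff.2 hx) 2)).trans_le (hT x)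

theorem inner_apply_self_nonneg_of_pos (hT : ∀ x, x ≠ 0 → 0 < ⟪T x, x⟫_ℝ) (x : E) :
    0 ≤ ⟪T x, x⟫_ℝ := by
  rcases eq_or_ne x 0 with rfl | hx
  · simp
  · exact (hT x hx).le

end

noncomputable section

namespace Poroelasticity

variable {H₁ H₂ K₀ : Type*}
  [NormedAddCommGroup H₁] [InnerProductSpace ℝ H₁]
  [NormedAddCommGroup H₂] [InnerProductSpace ℝ H₂]
  [NormedAddCommGroup K₀] [InnerProductSpace ℝ K₀]
  (M : H₁ →L[ℝ] H₁) (K : H₂ →L[ℝ] H₂) (B₁ : H₁ →L[ℝ] K₀) (B₂ : H₂ →L[ℝ] K₀)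
  (c₀ : ℝ) (h : K₀) (f : H₁) (g : H₂)

def energy (u : H₁) (q : H₂) : ℝ :=
  (1 / 2) * ⟪M u, u⟫_ℝ + (1 / 2) * ⟪K q, q⟫_ℝ
    + (1 / (2 * c₀)) * ‖h - B₁ u - B₂ q‖ ^ 2 - ⟪f, u⟫_ℝ - ⟪g, q⟫_ℝ

def pressure (u : H₁) (q : H₂) : K₀ := c₀⁻¹ • (h - B₁ u - B₂ q)

def firstVariation (u : H₁) (q : H₂) (a : H₁) (b : H₂) : ℝ :=
  (⟪M u, a⟫_ℝ - ⟪pressure B₁ B₂ c₀ h u q, B₁ a⟫_ℝ - ⟪f, a⟫_ℝ)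
    + (⟪K q, b⟫_ℝ - ⟪pressure B₁ B₂ c₀ h u q, B₂ b⟫_ℝ - ⟪g, b⟫_ℝ)

def secondVariation (a : H₁) (b : H₂) : ℝ :=
  ⟪M a, a⟫_ℝ + ⟪K b, b⟫_ℝ + c₀⁻¹ * ‖B₁ a + B₂ b‖ ^ 2

variable {M K B₁ B₂ c₀ h f g}

theorem energy_add (hM : (M : H₁ →ₗ[ℝ] H₁).IsSymmetric) (hK : (K : H₂ →ₗ[ℝ] H₂).IsSymmetric)
    (u : H₁) (q : H₂) (a : H₁) (b : H₂) :
    energy M K B₁ B₂ c₀ h f g (u + a) (q + b) =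
      energy M K B₁ B₂ c₀ h f g u q + firstVariation M K B₁ B₂ c₀ h f g u q a b
        + secondVariation M K B₁ B₂ c₀ a b / 2 := by
  have hres : h - B₁ (u + a) - B₂ (q + b) = (h - B₁ u - B₂ q) - (B₁ a + B₂ b) := by
    rw [map_add, map_add]; abel
  have hMs : ⟪M a, u⟫_ℝ = ⟪M u, a⟫_ℝ := (hM a u).trans (real_inner_comm (M u) a)
  have hKs : ⟪K b, q⟫_ℝ = ⟪K q, b⟫_ℝ := (hK b q).trans (real_inner_comm (K q) b)
  rw [energy, energy, hres, norm_sub_sq_real]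
  simp only [firstVariation, secondVariation, pressure, map_add, inner_add_left, inner_add_right,
    real_inner_smul_left, hMs, hKs]
  ring

theorem firstVariation_smul (u : H₁) (q : H₂) (a : H₁) (b : H₂) (t : ℝ) :
    firstVariation M K B₁ B₂ c₀ h f g u q (t • a) (t • b) =
      t * firstVariation M K B₁ B₂ c₀ h f g u q a b := by
  simp only [firstVariation, map_smul, real_inner_smul_right]
  ring

theorem secondVariation_smul (a : H₁) (b : H₂) (t : ℝ) :
    secondVariation M K B₁ B₂ c₀ (t • a) (t • b) = t ^ 2 * secondVariation M K B₁ B₂ c₀ a b := by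
  simp only [secondVariation, map_smul, ← smul_add, real_inner_smul_left, real_inner_smul_right,
    norm_smul, Real.norm_eq_abs, mul_pow, sq_abs]
  ring

theorem secondVariation_nonneg (hM : ∀ a, 0 ≤ ⟪M a, a⟫_ℝ) (hK : ∀ b, 0 ≤ ⟪K b, b⟫_ℝ)
    (hc₀ : 0 ≤ c₀) (a : H₁) (b : H₂) : 0 ≤ secondVariation M K B₁ B₂ c₀ a b :=
  add_nonneg (add_nonneg (hM a) (hK b)) (by positivity)

theorem eq_zero_of_secondVariation_eq_zero (hM : ∀ a, a ≠ 0 → 0 < ⟪M a, a⟫_ℝ)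
    (hK : ∀ b, b ≠ 0 → 0 < ⟪K b, b⟫_ℝ) (hc₀ : 0 ≤ c₀) {a : H₁} {b : H₂}
    (hQ : secondVariation M K B₁ B₂ c₀ a b = 0) : a = 0 ∧ b = 0 := by
  have hMa := inner_apply_self_nonneg_of_pos hM a
  have hKb := inner_apply_self_nonneg_of_pos hK b
  have hpen : 0 ≤ c₀⁻¹ * ‖B₁ a + B₂ b‖ ^ 2 := by positivity
  rw [secondVariation] at hQ
  constructor
  · by_contra ha
    linarith [hM a ha]
  · by_contra hb
    linarith [hK b hb]

theorem pressure_equation_iff (hc₀ : c₀ ≠ 0) (u : H₁) (q : H₂) (p : K₀) :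
    (∀ r : K₀, c₀ * ⟪p, r⟫_ℝ + ⟪B₁ u, r⟫_ℝ + ⟪B₂ q, r⟫_ℝ = ⟪h, r⟫_ℝ) ↔
      p = pressure B₁ B₂ c₀ h u q := by
  rw [pressure, eq_inv_smul_iff₀ hc₀]
  constructor
  · intro hp
    refine ext_inner_right ℝ fun r => ?_
    rw [real_inner_smul_left, inner_sub_left, inner_sub_left]
    linarith [hp r]
  · rintro hp r
    have hr := congrArg (⟪·, r⟫_ℝ) hp
    simp only [real_inner_smul_left, inner_sub_left] at hr
    linarith

theorem firstVariation_eq_zero_iff (u : H₁) (q : H₂) :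
    (∀ a b, firstVariation M K B₁ B₂ c₀ h f g u q a b = 0) ↔
      (∀ v, ⟪M u, v⟫_ℝ - ⟪pressure B₁ B₂ c₀ h u q, B₁ v⟫_ℝ = ⟪f, v⟫_ℝ) ∧
        (∀ w, ⟪K q, w⟫_ℝ - ⟪pressure B₁ B₂ c₀ h u q, B₂ w⟫_ℝ = ⟪g, w⟫_ℝ) := by
  constructor
  · intro hδ
    refine ⟨fun v => ?_, fun w => ?_⟩
    · simpa [firstVariation, sub_eq_zero] using hδ v 0
    · simpa [firstVariation, sub_eq_zero] using hδ 0 w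
  · rintro ⟨hu, hq⟩ a b
    rw [firstVariation, hu, hq, sub_self, sub_self, add_zero]

theorem firstVariation_eq_zero_of_isMin (hM : (M : H₁ →ₗ[ℝ] H₁).IsSymmetric)
    (hK : (K : H₂ →ₗ[ℝ] H₂).IsSymmetric) {u : H₁} {q : H₂}
    (hmin : ∀ u' q', energy M K B₁ B₂ c₀ h f g u q ≤ energy M K B₁ B₂ c₀ h f g u' q')
    (a : H₁) (b : H₂) : firstVariation M K B₁ B₂ c₀ h f g u q a b = 0 := by
  have hquad : ∀ t : ℝ, 0 ≤ secondVariation M K B₁ B₂ c₀ a b / 2 * (t * t)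
      + firstVariation M K B₁ B₂ c₀ h f g u q a b * t + 0 := fun t => by
    have := hmin (u + t • a) (q + t • b)
    rw [energy_add hM hK, firstVariation_smul, secondVariation_smul] at this
    linarith
  have hdisc := discrim_le_zero hquad
  rw [discrim, mul_zero, sub_zero] at hdisc
  exact pow_eq_zero_iff two_ne_zero |>.1 (le_antisymm hdisc (sq_nonneg _))

theorem energy_add_of_firstVariation_eq_zero (hM : (M : H₁ →ₗ[ℝ] H₁).IsSymmetric)
    (hK : (K : H₂ →ₗ[ℝ] H₂).IsSymmetric) {u : H₁} {q : H₂}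
    (hδ : ∀ a b, firstVariation M K B₁ B₂ c₀ h f g u q a b = 0) (a : H₁) (b : H₂) :
    energy M K B₁ B₂ c₀ h f g (u + a) (q + b) =
      energy M K B₁ B₂ c₀ h f g u q + secondVariation M K B₁ B₂ c₀ a b / 2 := by
  rw [energy_add hM hK, hδ, add_zero]

theorem energy_le_of_firstVariation_eq_zero (hM : (M : H₁ →ₗ[ℝ] H₁).IsSymmetric)
    (hK : (K : H₂ →ₗ[ℝ] H₂).IsSymmetric) (hMnonneg : ∀ a, 0 ≤ ⟪M a, a⟫_ℝ) (hKnonneg : ∀ b, 0 ≤ ⟪K b, b⟫_ℝ)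
    (hc₀ : 0 ≤ c₀) {u : H₁} {q : H₂}
    (hδ : ∀ a b, firstVariation M K B₁ B₂ c₀ h f g u q a b = 0) (u' : H₁) (q' : H₂) :
    energy M K B₁ B₂ c₀ h f g u q ≤ energy M K B₁ B₂ c₀ h f g u' q' := by
  have hexp := energy_add_of_firstVariation_eq_zero hM hK hδ (u' - u) (q' - q)
  rw [add_sub_cancel, add_sub_cancel] at hexp
  linarith [secondVariation_nonneg hMnonneg hKnonneg hc₀ (B₁ := B₁) (B₂ := B₂) (u' - u) (q' - q)]

theorem eq_of_energy_le_of_firstVariation_eq_zero (hM : (M : H₁ →ₗ[ℝ] H₁).IsSymmetric)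
    (hK : (K : H₂ →ₗ[ℝ] H₂).IsSymmetric) (hMpos : ∀ a, a ≠ 0 → 0 < ⟪M a, a⟫_ℝ)
    (hKpos : ∀ b, b ≠ 0 → 0 < ⟪K b, b⟫_ℝ) (hc₀ : 0 ≤ c₀) {u u' : H₁} {q q' : H₂}
    (hδ : ∀ a b, firstVariation M K B₁ B₂ c₀ h f g u q a b = 0)
    (hle : energy M K B₁ B₂ c₀ h f g u' q' ≤ energy M K B₁ B₂ c₀ h f g u q) :
    u' = u ∧ q' = q := by
  have hexp := energy_add_of_firstVariation_eq_zero hM hK hδ (u' - u) (q' - q)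
  rw [add_sub_cancel, add_sub_cancel] at hexp
  have hQ : secondVariation M K B₁ B₂ c₀ (u' - u) (q' - q) = 0 :=
    le_antisymm (by linarith)
      (secondVariation_nonneg (inner_apply_self_nonneg_of_pos hMpos)
        (inner_apply_self_nonneg_of_pos hKpos) hc₀ _ _)
  obtain ⟨hu, hq⟩ := eq_zero_of_secondVariation_eq_zero hMpos hKpos hc₀ hQ
  exact ⟨sub_eq_zero.1 hu, sub_eq_zero.1 hq⟩

end Poroelasticity

end

open Poroelasticity in
theorem three_field_system_iff_minimization_general
    {H₁ H₂ K₀ : Type*}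
    [NormedAddCommGroup H₁] [InnerProductSpace ℝ H₁] [CompleteSpace H₁]
    [NormedAddCommGroup H₂] [InnerProductSpace ℝ H₂] [CompleteSpace H₂]
    [NormedAddCommGroup K₀] [InnerProductSpace ℝ K₀]
    (M : H₁ →L[ℝ] H₁) (Kop : H₂ →L[ℝ] H₂)
    (hM : IsSelfAdjoint M) (hKop : IsSelfAdjoint Kop)
    (μM μK : ℝ) (hμM : 0 < μM) (hμK : 0 < μK)
    (hMco : ∀ v : H₁, μM * ‖v‖ ^ 2 ≤ ⟪M v, v⟫_ℝ)
    (hKco : ∀ w : H₂, μK * ‖w‖ ^ 2 ≤ ⟪Kop w, w⟫_ℝ)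
    (B₁ : H₁ →L[ℝ] K₀) (B₂ : H₂ →L[ℝ] K₀)
    (c₀ : ℝ) (hc₀ : 0 < c₀) (h : K₀) (f : H₁) (g : H₂)
    (E : H₁ → H₂ → ℝ)
    (hE : ∀ u q, E u q = (1 / 2) * ⟪M u, u⟫_ℝ + (1 / 2) * ⟪Kop q, q⟫_ℝ
      + (1 / (2 * c₀)) * ‖h - B₁ u - B₂ q‖ ^ 2 - ⟪f, u⟫_ℝ - ⟪g, q⟫_ℝ) :
    ∀ (u : H₁) (q : H₂) (p : K₀),
      ((∀ v : H₁, ⟪M u, v⟫_ℝ - ⟪p, B₁ v⟫_ℝ = ⟪f, v⟫_ℝ) ∧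
       (∀ r : K₀, c₀ * ⟪p, r⟫_ℝ + ⟪B₁ u, r⟫_ℝ + ⟪B₂ q, r⟫_ℝ = ⟪h, r⟫_ℝ) ∧
       (∀ w : H₂, ⟪Kop q, w⟫_ℝ - ⟪p, B₂ w⟫_ℝ = ⟪g, w⟫_ℝ)) ↔
      ((∀ (u' : H₁) (q' : H₂), E u q ≤ E u' q') ∧
       (∀ (u' : H₁) (q' : H₂),
          (∀ (u'' : H₁) (q'' : H₂), E u' q' ≤ E u'' q'') → u' = u ∧ q' = q) ∧
       p = c₀⁻¹ • (h - B₁ u - B₂ q)) := by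
  intro u q p
  obtain rfl : E = energy M Kop B₁ B₂ c₀ h f g := funext fun u => funext (hE u)
  have hMpos := inner_apply_self_pos_of_coercive hμM hMco
  have hKpos := inner_apply_self_pos_of_coercive hμK hKco
  rw [pressure_equation_iff hc₀.ne']
  constructor
  · rintro ⟨hu, rfl, hq⟩
    have hδ := (firstVariation_eq_zero_iff u q).2 ⟨hu, hq⟩
    refine ⟨energy_le_of_firstVariation_eq_zero hM.isSymmetric hKop.isSymmetric
        (inner_apply_self_nonneg_of_pos hMpos) (inner_apply_self_nonneg_of_pos hKpos) hc₀.le hδ,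
      fun u' q' hmin' => ?_, rfl⟩
    exact eq_of_energy_le_of_firstVariation_eq_zero hM.isSymmetric hKop.isSymmetric hMpos hKpos
      hc₀.le hδ (hmin' u q)
  · rintro ⟨hmin, -, rfl⟩
    obtain ⟨hu, hq⟩ := (firstVariation_eq_zero_iff u q).1
      (firstVariation_eq_zero_of_isMin hM.isSymmetric hKop.isSymmetric hmin)
    exact ⟨hu, rfl, hq⟩

/-- equivalence of the three-field coupled linear system of
semi-discrete dynamic poroelasticity with the two-field minimization of the
energy `E(u,q) = ½⟨Mu,u⟩ + ½⟨Kq,q⟩ + (1/2c₀)‖h − B₁u − B₂q‖² − ⟨f,u⟩ − ⟨g,q⟩`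
together with pressure post-processing `p = c₀⁻¹(h − B₁u − B₂q)`. -/
theorem three_field_system_iff_minimization
    {H₁ H₂ K₀ : Type*}
    [NormedAddCommGroup H₁] [InnerProductSpace ℝ H₁] [CompleteSpace H₁]
    [NormedAddCommGroup H₂] [InnerProductSpace ℝ H₂] [CompleteSpace H₂]
    [NormedAddCommGroup K₀] [InnerProductSpace ℝ K₀] [CompleteSpace K₀]
    (M : H₁ →L[ℝ] H₁) (Kop : H₂ →L[ℝ] H₂)
    (hM : IsSelfAdjoint M) (hKop : IsSelfAdjoint Kop)
    (μM μK : ℝ) (hμM : 0 < μM) (hμK : 0 < μK)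
    (hMco : ∀ v : H₁, μM * ‖v‖ ^ 2 ≤ ⟪M v, v⟫_ℝ)
    (hKco : ∀ w : H₂, μK * ‖w‖ ^ 2 ≤ ⟪Kop w, w⟫_ℝ)
    (B₁ : H₁ →L[ℝ] K₀) (B₂ : H₂ →L[ℝ] K₀)
    (c₀ : ℝ) (hc₀ : 0 < c₀) (h : K₀) (f : H₁) (g : H₂)
    (E : H₁ → H₂ → ℝ)
    (hE : ∀ u q, E u q = (1 / 2) * ⟪M u, u⟫_ℝ + (1 / 2) * ⟪Kop q, q⟫_ℝ
      + (1 / (2 * c₀)) * ‖h - B₁ u - B₂ q‖ ^ 2 - ⟪f, u⟫_ℝ - ⟪g, q⟫_ℝ) :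
    ∀ (u : H₁) (q : H₂) (p : K₀),
      ((∀ v : H₁, ⟪M u, v⟫_ℝ - ⟪p, B₁ v⟫_ℝ = ⟪f, v⟫_ℝ) ∧
       (∀ r : K₀, c₀ * ⟪p, r⟫_ℝ + ⟪B₁ u, r⟫_ℝ + ⟪B₂ q, r⟫_ℝ = ⟪h, r⟫_ℝ) ∧
       (∀ w : H₂, ⟪Kop q, w⟫_ℝ - ⟪p, B₂ w⟫_ℝ = ⟪g, w⟫_ℝ)) ↔
      ((∀ (u' : H₁) (q' : H₂), E u q ≤ E u' q') ∧
       (∀ (u' : H₁) (q' : H₂),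
          (∀ (u'' : H₁) (q'' : H₂), E u' q' ≤ E u'' q'') → u' = u ∧ q' = q) ∧
       p = c₀⁻¹ • (h - B₁ u - B₂ q)) :=
  three_field_system_iff_minimization_general M Kop hM hKop μM μK hμM hμK hMco hKco B₁ B₂ c₀ hc₀ h f
    g E hE
end

section
/- Under the assumptions of the previous equivalence (coupled system ↔ minimization), a single sweep of alternating minimization applied to E, starting from (u^{k−1}, q^{k−1}) with p^{k−1} = c₀⁻¹(h − B₁u^{k−1} − B₂q^{k−1}), is equivalent to the stabilized splitting: first find u^k with ⟨Mu^k, v⟩ + (1/c₀)⟨B₁(u^k − u^{k−1}), B₁v⟩ − ⟨p^{k−1}, B₁v⟩ = ⟨f, v⟩ for all v; then find (p^k, q^k) with c₀⟨p^k, r⟩ + ⟨B₁u^k, r⟩ + ⟨B₂q^k, r⟩ = ⟨h, r⟩ for all r, and ⟨Kq^k, w⟩ − ⟨p^k, B₂w⟩ = ⟨g, w⟩ for all w. -/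
/-!
Freezing one argument of `E` leaves, up to a constant, a convex quadratic
`½⟪A x, x⟫ + (2c₀)⁻¹‖r - B x‖² - ⟪f, x⟫`, whose minimizers are exactly its critical points
(the quadratic part `Q` is nonnegative, and `t L v + t² Q v ≥ 0` for all `t` forces `L v = 0`).
The Euler–Lagrange equations of the two partial minimizations are the two schemes once the
residual `c₀⁻¹(r - B x)` is rewritten as a pressure: for the `q`-step it is `pnew` itself, for the
`u`-step it is `pold - c₀⁻¹ B₁(unew - uold)`, which produces the stabilization term. The
remaining equation of the split is the definition of `pnew`.
-/

open scoped InnerProductSpace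

theorem forall_le_iff_forall_eq_zero_of_quadratic_expansion {E : Type*} [AddCommGroup E]
    [Module ℝ E] {F : E → ℝ} {x : E} (L : E →ₗ[ℝ] ℝ) {Q : E → ℝ}
    (hQ_smul : ∀ (t : ℝ) v, Q (t • v) = t ^ 2 * Q v) (hQ_nonneg : ∀ v, 0 ≤ Q v)
    (hF : ∀ v, F (x + v) = F x + L v + Q v) :
    (∀ y, F x ≤ F y) ↔ ∀ v, L v = 0 := by
  constructor
  · intro hmin v
    have hquad : ∀ t : ℝ, 0 ≤ Q v * (t * t) + L v * t + 0 := fun t => by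
      have := hmin (x + t • v)
      rw [hF, map_smul, hQ_smul] at this
      simp only [smul_eq_mul] at this
      nlinarith
    have := discrim_le_zero hquad
    unfold discrim at this
    nlinarith [sq_nonneg (L v)]
  · intro hL y
    have := hF (y - x)
    rw [add_sub_cancel, hL] at this
    linarith [hQ_nonneg (y - x)]

section PenalizedQuadratic

variable {H K : Type*} [NormedAddCommGroup H] [InnerProductSpace ℝ H]
  [NormedAddCommGroup K] [InnerProductSpace ℝ K]

noncomputable def penalizedQuadratic (A : H →L[ℝ] H) (B : H →L[ℝ] K) (c : ℝ) (r : K) (f : H)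
    (x : H) : ℝ :=
  (1 / 2) * ⟪A x, x⟫_ℝ + (1 / (2 * c)) * ‖r - B x‖ ^ 2 - ⟪f, x⟫_ℝ

theorem penalizedQuadratic_add {A : H →L[ℝ] H} (hA : A.IsSymmetric) (B : H →L[ℝ] K) (c : ℝ)
    (r : K) (f x v : H) :
    penalizedQuadratic A B c r f (x + v) = penalizedQuadratic A B c r f x
      + (⟪A x, v⟫_ℝ - ⟪c⁻¹ • (r - B x), B v⟫_ℝ - ⟪f, v⟫_ℝ)
      + ((1 / 2) * ⟪A v, v⟫_ℝ + (1 / (2 * c)) * ‖B v‖ ^ 2) := by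
  have hsub : r - B (x + v) = (r - B x) - B v := by rw [map_add, sub_add_eq_sub_sub]
  have hsymm : ⟪A v, x⟫_ℝ = ⟪A x, v⟫_ℝ := (hA v x).trans (real_inner_comm _ _)
  rw [penalizedQuadratic, penalizedQuadratic, hsub, norm_sub_sq_real]
  simp only [map_add, inner_add_left, inner_add_right, real_inner_smul_left, hsymm]
  ring

theorem penalizedQuadratic_forall_le_iff {A : H →L[ℝ] H} (hA : A.IsPositive) (B : H →L[ℝ] K)
    {c : ℝ} (hc : 0 < c) (r : K) (f x : H) :
    (∀ y, penalizedQuadratic A B c r f x ≤ penalizedQuadratic A B c r f y) ↔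
      ∀ v, ⟪A x, v⟫_ℝ - ⟪c⁻¹ • (r - B x), B v⟫_ℝ = ⟪f, v⟫_ℝ := by
  let L : H →L[ℝ] ℝ := innerSL ℝ (A x) - (innerSL ℝ (c⁻¹ • (r - B x))).comp B - innerSL ℝ f
  have hQ_nonneg : ∀ v, 0 ≤ (1 / 2) * ⟪A v, v⟫_ℝ + (1 / (2 * c)) * ‖B v‖ ^ 2 := fun v => by
    have := hA.inner_nonneg_left v
    positivity
  rw [forall_le_iff_forall_eq_zero_of_quadratic_expansion (L : H →ₗ[ℝ] ℝ) (fun t v => ?_)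
    hQ_nonneg (penalizedQuadratic_add hA.isSymmetric B c r f x)]
  · exact forall_congr' fun v => sub_eq_zero
  · simp only [map_smul, real_inner_smul_left, real_inner_smul_right, norm_smul,
      Real.norm_eq_abs, mul_pow, sq_abs]
    ring

end PenalizedQuadratic

theorem alternating_minimization_iff_undrained_split_general
    {H₁ H₂ K₀ : Type*}
    [NormedAddCommGroup H₁] [InnerProductSpace ℝ H₁] [CompleteSpace H₁]
    [NormedAddCommGroup H₂] [InnerProductSpace ℝ H₂] [CompleteSpace H₂]
    [NormedAddCommGroup K₀] [InnerProductSpace ℝ K₀]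
    (M : H₁ →L[ℝ] H₁) (Kop : H₂ →L[ℝ] H₂)
    (hM : IsSelfAdjoint M) (hKop : IsSelfAdjoint Kop)
    (μM μK : ℝ) (hμM : 0 < μM) (hμK : 0 < μK)
    (hMco : ∀ v : H₁, μM * ‖v‖ ^ 2 ≤ ⟪M v, v⟫_ℝ)
    (hKco : ∀ w : H₂, μK * ‖w‖ ^ 2 ≤ ⟪Kop w, w⟫_ℝ)
    (B₁ : H₁ →L[ℝ] K₀) (B₂ : H₂ →L[ℝ] K₀)
    (c₀ : ℝ) (hc₀ : 0 < c₀) (h : K₀) (f : H₁) (g : H₂)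
    (E : H₁ → H₂ → ℝ)
    (hE : ∀ u q, E u q = (1 / 2) * ⟪M u, u⟫_ℝ + (1 / 2) * ⟪Kop q, q⟫_ℝ
      + (1 / (2 * c₀)) * ‖h - B₁ u - B₂ q‖ ^ 2 - ⟪f, u⟫_ℝ - ⟪g, q⟫_ℝ)
    (uold unew : H₁) (qold qnew : H₂) (pold pnew : K₀)
    (hpold : pold = c₀⁻¹ • (h - B₁ uold - B₂ qold))
    (hpnew : pnew = c₀⁻¹ • (h - B₁ unew - B₂ qnew)) :
    ((∀ u' : H₁, E unew qold ≤ E u' qold) ∧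
     (∀ q' : H₂, E unew qnew ≤ E unew q')) ↔
    ((∀ v : H₁, ⟪M unew, v⟫_ℝ + (1 / c₀) * ⟪B₁ (unew - uold), B₁ v⟫_ℝ
        - ⟪pold, B₁ v⟫_ℝ = ⟪f, v⟫_ℝ) ∧
     (∀ r : K₀, c₀ * ⟪pnew, r⟫_ℝ + ⟪B₁ unew, r⟫_ℝ + ⟪B₂ qnew, r⟫_ℝ
        = ⟪h, r⟫_ℝ) ∧
     (∀ w : H₂, ⟪Kop qnew, w⟫_ℝ - ⟪pnew, B₂ w⟫_ℝ = ⟪g, w⟫_ℝ)) := by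
  have hMpos : M.IsPositive :=
    M.isPositive_iff.2 ⟨hM.isSymmetric, fun v => le_trans (by positivity) (hMco v)⟩
  have hKpos : Kop.IsPositive :=
    Kop.isPositive_iff.2 ⟨hKop.isSymmetric, fun w => le_trans (by positivity) (hKco w)⟩
  have hE_u : ∀ u, E u qold = penalizedQuadratic M B₁ c₀ (h - B₂ qold) f u
      + ((1 / 2) * ⟪Kop qold, qold⟫_ℝ - ⟪g, qold⟫_ℝ) := fun u => by
    rw [hE, penalizedQuadratic, sub_right_comm h]; ring
  have hE_q : ∀ q, E unew q = penalizedQuadratic Kop B₂ c₀ (h - B₁ unew) g q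
      + ((1 / 2) * ⟪M unew, unew⟫_ℝ - ⟪f, unew⟫_ℝ) := fun q => by
    rw [hE, penalizedQuadratic]; ring
  have hp_u : c₀⁻¹ • (h - B₂ qold - B₁ unew) = pold - c₀⁻¹ • B₁ (unew - uold) := by
    rw [hpold, ← smul_sub, map_sub]; congr 1; abel
  have hu : (∀ u', E unew qold ≤ E u' qold) ↔ ∀ v : H₁, ⟪M unew, v⟫_ℝ
      + (1 / c₀) * ⟪B₁ (unew - uold), B₁ v⟫_ℝ - ⟪pold, B₁ v⟫_ℝ = ⟪f, v⟫_ℝ := by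
    simp only [hE_u, add_le_add_iff_right, penalizedQuadratic_forall_le_iff hMpos B₁ hc₀, hp_u,
      inner_sub_left, real_inner_smul_left]
    exact forall_congr' fun v => Iff.of_eq (by ring_nf)
  have hq : (∀ q', E unew qnew ≤ E unew q') ↔
      ∀ w : H₂, ⟪Kop qnew, w⟫_ℝ - ⟪pnew, B₂ w⟫_ℝ = ⟪g, w⟫_ℝ := by
    simp only [hE_q, add_le_add_iff_right, penalizedQuadratic_forall_le_iff hKpos B₂ hc₀, ← hpnew]
  have hmass : c₀ • pnew + B₁ unew + B₂ qnew = h := by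
    rw [hpnew, smul_inv_smul₀ hc₀.ne']; abel
  rw [hu, hq]
  refine ⟨fun ⟨hu_eq, hq_eq⟩ => ⟨hu_eq, fun r => ?_, hq_eq⟩,
    fun ⟨hu_eq, _, hq_eq⟩ => ⟨hu_eq, hq_eq⟩⟩
  rw [← real_inner_smul_left, ← inner_add_left, ← inner_add_left, hmass]

/-- one sweep of alternating minimization applied to
`E(u,q) = ½⟨Mu,u⟩ + ½⟨Kq,q⟩ + (1/2c₀)‖h − B₁u − B₂q‖² − ⟨f,u⟩ − ⟨g,q⟩`,
starting from `(uold, qold)` with `pold = c₀⁻¹(h − B₁uold − B₂qold)`, is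
equivalent to the stabilized (undrained) splitting scheme. -/
theorem alternating_minimization_iff_undrained_split
    {H₁ H₂ K₀ : Type*}
    [NormedAddCommGroup H₁] [InnerProductSpace ℝ H₁] [CompleteSpace H₁]
    [NormedAddCommGroup H₂] [InnerProductSpace ℝ H₂] [CompleteSpace H₂]
    [NormedAddCommGroup K₀] [InnerProductSpace ℝ K₀] [CompleteSpace K₀]
    (M : H₁ →L[ℝ] H₁) (Kop : H₂ →L[ℝ] H₂)
    (hM : IsSelfAdjoint M) (hKop : IsSelfAdjoint Kop)
    (μM μK : ℝ) (hμM : 0 < μM) (hμK : 0 < μK)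
    (hMco : ∀ v : H₁, μM * ‖v‖ ^ 2 ≤ ⟪M v, v⟫_ℝ)
    (hKco : ∀ w : H₂, μK * ‖w‖ ^ 2 ≤ ⟪Kop w, w⟫_ℝ)
    (B₁ : H₁ →L[ℝ] K₀) (B₂ : H₂ →L[ℝ] K₀)
    (c₀ : ℝ) (hc₀ : 0 < c₀) (h : K₀) (f : H₁) (g : H₂)
    (E : H₁ → H₂ → ℝ)
    (hE : ∀ u q, E u q = (1 / 2) * ⟪M u, u⟫_ℝ + (1 / 2) * ⟪Kop q, q⟫_ℝ
      + (1 / (2 * c₀)) * ‖h - B₁ u - B₂ q‖ ^ 2 - ⟪f, u⟫_ℝ - ⟪g, q⟫_ℝ)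
    (uold unew : H₁) (qold qnew : H₂) (pold pnew : K₀)
    (hpold : pold = c₀⁻¹ • (h - B₁ uold - B₂ qold))
    (hpnew : pnew = c₀⁻¹ • (h - B₁ unew - B₂ qnew)) :
    ((∀ u' : H₁, E unew qold ≤ E u' qold) ∧
     (∀ q' : H₂, E unew qnew ≤ E unew q')) ↔
    ((∀ v : H₁, ⟪M unew, v⟫_ℝ + (1 / c₀) * ⟪B₁ (unew - uold), B₁ v⟫_ℝ
        - ⟪pold, B₁ v⟫_ℝ = ⟪f, v⟫_ℝ) ∧
     (∀ r : K₀, c₀ * ⟪pnew, r⟫_ℝ + ⟪B₁ unew, r⟫_ℝ + ⟪B₂ qnew, r⟫_ℝ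
        = ⟪h, r⟫_ℝ) ∧
     (∀ w : H₂, ⟪Kop qnew, w⟫_ℝ - ⟪pnew, B₂ w⟫_ℝ = ⟪g, w⟫_ℝ)) :=
  alternating_minimization_iff_undrained_split_general M Kop hM hKop μM μK hμM hμK hMco hKco B₁ B₂
    c₀ hc₀ h f g E hE uold unew qold qnew pold pnew hpold hpnew
end
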